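/- arXiv:1704.05489 — 8 statements merged into one kernel-verified Lean document; each statement's English description precedes it below -/
import Mathlib

section
/- Let ℓ be a prime, and let T be the d²×d integer matrix formed by stacking d copies of the d×d identity matrix vertically. Then T is ℓ-Pirutka: for all nonempty subsets I ⊆ {1,…,d²} and J ⊆ {1,…,d} with |I| − |J| = d² − d, the submatrix T_{I,J} has rank |J| modulo ℓ. -/
/-- An `n × d` integer matrix `T` is `ℓ`-Pirutka if for all nonempty subsets
`I ⊆ Fin n` and `J ⊆ Fin d` with `|I| - |J| = n - d`, the submatrix `T_{I,J}`
has maximal rank `|J|` modulo `ℓ`. -/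
def IsPirutka (ℓ n d : ℕ) (T : Matrix (Fin n) (Fin d) ℤ) : Prop :=
  ∀ (I : Finset (Fin n)) (J : Finset (Fin d)), I.Nonempty → J.Nonempty →
    I.card + d = J.card + n →
    ((T.map (Int.cast : ℤ → ZMod ℓ)).submatrix
        (fun i : {x // x ∈ I} => (i : Fin n))
        (fun j : {x // x ∈ J} => (j : Fin d))).rank = J.card

/-!
Every column `j ∈ J` has `d` rows congruent to `j` mod `d`, while the size condition forces
`|Iᶜ| = d - |J| < d`; so `I` contains, for each `j ∈ J`, a row with residue `j`. These rows
form a `|J| × |J|` identity submatrix, so the rank is `|J|`.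
-/

theorem Matrix.rank_eq_card_of_submatrix_eq_one {m n R : Type*} [Fintype n] [DecidableEq n]
    [CommSemiring R] [StrongRankCondition R] (A : Matrix m n R) (r : n → m)
    (h : A.submatrix r id = 1) : A.rank = Fintype.card n :=
  le_antisymm A.rank_le_card_width (by simpa [h] using A.rank_submatrix_le r id)

theorem Fin.exists_mem_mod_eq_of_card_compl_lt {m d : ℕ} (I : Finset (Fin (m * d)))
    (hI : Iᶜ.card < m) (j : Fin d) : ∃ i ∈ I, (i : ℕ) % d = j := by
  let fiber : Fin m ↪ Fin (m * d) := ⟨fun k => finProdFinEquiv (k, j),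
    finProdFinEquiv.injective.comp (Prod.mk_left_injective j)⟩
  obtain ⟨i, hfiber, hiI⟩ := Finset.exists_mem_notMem_of_card_lt_card
    (s := Iᶜ) (t := Finset.univ.map fiber) (by simpa using hI)
  obtain ⟨k, -, rfl⟩ := Finset.mem_map.mp hfiber
  refine ⟨_, by simpa using hiI, ?_⟩
  show (j + d * k : ℕ) % d = j
  simp [Nat.mod_eq_of_lt j.is_lt]

/-- The `d² × d` matrix formed by stacking `d` copies of the identity matrix
is `ℓ`-Pirutka for every prime `ℓ`. -/
theorem stacked_identity_isPirutka (ℓ d : ℕ) (hℓ : ℓ.Prime) :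
    IsPirutka ℓ (d * d) d
      (Matrix.of fun (i : Fin (d * d)) (j : Fin d) =>
        if (i : ℕ) % d = (j : ℕ) then (1 : ℤ) else 0) := by
  have : Fact ℓ.Prime := ⟨hℓ⟩
  intro I J _ hJ hcard
  have hIc : Iᶜ.card < d := by
    have hJpos := hJ.card_pos
    have hJle := J.card_le_univ
    rw [Fintype.card_fin] at hJle
    rw [Finset.card_compl, Fintype.card_fin]
    omega
  choose row hrowI hrow using Fin.exists_mem_mod_eq_of_card_compl_lt I hIc
  rw [← Fintype.card_coe J]
  refine Matrix.rank_eq_card_of_submatrix_eq_one _ (fun j => ⟨row j, hrowI j⟩) ?_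
  ext j j'
  simp only [Matrix.submatrix_apply, Matrix.map_apply, Matrix.of_apply, id, hrow, Fin.val_inj,
    ← Subtype.ext_iff, Matrix.one_apply, Int.cast_ite, Int.cast_one, Int.cast_zero]
end

section
/- The 3×3 integer matrix with rows (1,3,3), (1,2,1), (1,1,2) is ℓ-Pirutka for every prime ℓ > 3. -/
open Matrix

theorem Matrix.rank_eq_card_of_isUnit_det_submatrix {ι m n R : Type*} [Fintype ι]
    [DecidableEq ι] [Fintype n] [CommRing R] [StrongRankCondition R]
    (A : Matrix m n R) (e₁ : ι ≃ m) (e₂ : ι ≃ n) (h : IsUnit (A.submatrix e₁ e₂).det) :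
    A.rank = Fintype.card ι := by
  rw [← rank_submatrix A e₁ e₂, rank_of_isUnit _ ((isUnit_iff_isUnit_det _).mpr h)]

theorem isPirutka_of_not_dvd_det_submatrix {ℓ n : ℕ} [Fact ℓ.Prime]
    (T : Matrix (Fin n) (Fin n) ℤ)
    (hT : ∀ k (r c : Fin k → Fin n), r.Injective → c.Injective →
      ¬ (ℓ : ℤ) ∣ (T.submatrix r c).det) :
    IsPirutka ℓ n n T := by
  intro I J _ _ hcard
  have hIJ : I.card = J.card := by omega
  rw [← Fintype.card_fin J.card]
  refine rank_eq_card_of_isUnit_det_submatrix _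
    (I.orderIsoOfFin hIJ).toEquiv (J.orderIsoOfFin rfl).toEquiv ?_
  have hdet := hT _ _ _ (I.orderEmbOfFin hIJ).injective (J.orderEmbOfFin rfl).injective
  rw [← ZMod.intCast_zmod_eq_zero_iff_dvd, Int.cast_det] at hdet
  exact isUnit_iff_ne_zero.mpr hdet

theorem natAbs_det_submatrix_mem_Icc_one_three (k : ℕ) (r c : Fin k → Fin 3)
    (hr : r.Injective) (hc : c.Injective) :
    (!![(1 : ℤ), 3, 3; 1, 2, 1; 1, 1, 2].submatrix r c).det.natAbs ∈ Finset.Icc 1 3 := by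
  have hk : k ≤ 3 := by simpa using Fintype.card_le_of_injective r hr
  interval_cases k <;> revert r c <;> decide

/-- The 3×3 matrix with rows (1,3,3), (1,2,1), (1,1,2) is ℓ-Pirutka for
every prime ℓ > 3. -/
theorem matrix_3x3_isPirutka (ℓ : ℕ) (hℓ : ℓ.Prime) (h3 : 3 < ℓ) :
    IsPirutka ℓ 3 3 !![1, 3, 3; 1, 2, 1; 1, 1, 2] := by
  have : Fact ℓ.Prime := ⟨hℓ⟩
  refine isPirutka_of_not_dvd_det_submatrix _ fun k r c hr hc hdvd => ?_
  obtain ⟨hpos, hle⟩ := Finset.mem_Icc.mp (natAbs_det_submatrix_mem_Icc_one_three k r c hr hc)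
  have hℓle := Nat.le_of_dvd hpos (Int.natCast_dvd.mp hdvd)
  omega
end

section
/- The 4×3 integer matrix with rows (1,1,1), (1,1,0), (0,1,1), (1,2,1) is ℓ-Pirutka for every prime ℓ. -/
theorem Matrix.rank_eq_card_width_of_isUnit_det_submatrix {R m n : Type*} [CommRing R]
    [StrongRankCondition R] [Fintype m] [Fintype n] (A : Matrix m n R) {k : ℕ}
    (r : Fin k → m) (c : Fin k → n) (hk : Fintype.card n = k)
    (h : IsUnit (A.submatrix r c).det) : A.rank = Fintype.card n := by
  refine le_antisymm A.rank_le_card_width ?_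
  calc Fintype.card n = (A.submatrix r c).rank := by
        rw [rank_of_isUnit _ ((isUnit_iff_isUnit_det _).mpr h), Fintype.card_fin, hk]
    _ ≤ A.rank := rank_submatrix_le A r c

/-- Rows and columns of the minor may repeat; a determinant `±1` rules that out. -/
def HasUnimodularMinor {n d : ℕ} (T : Matrix (Fin n) (Fin d) ℤ) (I : Finset (Fin n))
    (J : Finset (Fin d)) : Prop :=
  ∃ r : Fin J.card → Fin n, ∃ c : Fin J.card → Fin d, (∀ i, r i ∈ I) ∧ (∀ j, c j ∈ J) ∧
    (T.submatrix r c).det.natAbs = 1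

instance {n d : ℕ} (T : Matrix (Fin n) (Fin d) ℤ) (I : Finset (Fin n)) (J : Finset (Fin d)) :
    Decidable (HasUnimodularMinor T I J) := by
  unfold HasUnimodularMinor
  infer_instance

theorem HasUnimodularMinor.rank_submatrix_map_eq_card {R : Type*} [CommRing R] [Nontrivial R]
    {n d : ℕ} {T : Matrix (Fin n) (Fin d) ℤ} {I : Finset (Fin n)} {J : Finset (Fin d)}
    (h : HasUnimodularMinor T I J) :
    ((T.map (Int.cast : ℤ → R)).submatrix
        (fun i : {x // x ∈ I} => (i : Fin n))
        (fun j : {x // x ∈ J} => (j : Fin d))).rank = J.card := by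
  obtain ⟨r, c, hr, hc, hdet⟩ := h
  have hunit : IsUnit ((T.submatrix r c).det : R) :=
    (Int.isUnit_iff_natAbs_eq.mpr hdet).map (Int.castRingHom R)
  rw [Int.cast_det] at hunit
  refine (Matrix.rank_eq_card_width_of_isUnit_det_submatrix _
    (fun i => ⟨r i, hr i⟩) (fun j => ⟨c j, hc j⟩) (Fintype.card_coe J) ?_).trans
    (Fintype.card_coe J)
  exact hunit

theorem IsPirutka.of_hasUnimodularMinor {ℓ n d : ℕ} [Nontrivial (ZMod ℓ)]
    {T : Matrix (Fin n) (Fin d) ℤ}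
    (h : ∀ (I : Finset (Fin n)) (J : Finset (Fin d)), I.Nonempty → J.Nonempty →
      I.card + d = J.card + n → HasUnimodularMinor T I J) :
    IsPirutka ℓ n d T :=
  fun I J hI hJ hcard => (h I J hI hJ hcard).rank_submatrix_map_eq_card

/-- The 4×3 matrix with rows (1,1,1), (1,1,0), (0,1,1), (1,2,1) is ℓ-Pirutka
for every prime ℓ. -/
theorem matrix_4x3_isPirutka (ℓ : ℕ) (hℓ : ℓ.Prime) :
    IsPirutka ℓ 4 3 !![1, 1, 1; 1, 1, 0; 0, 1, 1; 1, 2, 1] := by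
  have : Fact ℓ.Prime := ⟨hℓ⟩
  exact IsPirutka.of_hasUnimodularMinor (by decide +kernel)
end

section
/- There is no 3-Pirutka 3×3 matrix; that is, for every 3×3 integer matrix T there exist nonempty subsets I, J ⊆ {1,2,3} with |I| = |J| such that the submatrix T_{I,J} does not have rank |J| modulo 3. -/
open Matrix

section RankSubmatrix

variable {m n K : Type*} [Fintype n] [Field K]

theorem Matrix.rank_lt_card_of_mulVec_eq_zero (M : Matrix m n K) {v : n → K} (hv : v ≠ 0)
    (hMv : M *ᵥ v = 0) : M.rank < Fintype.card n := by
  have hker : 0 < Module.finrank K (LinearMap.ker M.mulVecLin) :=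
    Module.finrank_pos_iff_exists_ne_zero.mpr
      ⟨⟨v, hMv⟩, fun h => hv (congrArg Subtype.val h)⟩
  have := LinearMap.finrank_range_add_finrank_ker M.mulVecLin
  rw [Module.finrank_pi] at this
  rw [Matrix.rank]
  omega

theorem Matrix.rank_submatrix_lt_of_mulVec_eq_zero (M : Matrix m n K) (I : Finset m)
    (J : Finset n) {w : n → K} (hwJ : ∀ j ∉ J, w j = 0) (hw : w ≠ 0)
    (hMw : ∀ i ∈ I, (M *ᵥ w) i = 0) :
    (M.submatrix (fun i : {x // x ∈ I} => (i : m)) (fun j : {x // x ∈ J} => (j : n))).rank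
      < J.card := by
  have hv : (fun j : {x // x ∈ J} => w j) ≠ 0 := by
    contrapose! hw
    funext j
    by_cases hj : j ∈ J
    · exact congrFun hw ⟨j, hj⟩
    · exact hwJ j hj
  have hsum (i : m) : ∑ j : {x // x ∈ J}, M i j * w j = (M *ᵥ w) i := by
    rw [Finset.sum_coe_sort J (fun j => M i j * w j), mulVec, dotProduct]
    exact Finset.sum_subset (Finset.subset_univ J) fun j _ hj => by rw [hwJ j hj, mul_zero]
  have hker : M.submatrix (fun i : {x // x ∈ I} => (i : m)) (fun j : {x // x ∈ J} => (j : n))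
      *ᵥ (fun j => w j) = 0 := by
    funext i
    exact (hsum i).trans (hMw i i.2)
  simpa using rank_lt_card_of_mulVec_eq_zero _ hv hker

variable [DecidableEq n]

theorem Matrix.rank_submatrix_singleton_lt {M : Matrix m n K} {i : m} {j : n} (h : M i j = 0) :
    (M.submatrix (fun i' : {x // x ∈ ({i} : Finset m)} => (i' : m))
      (fun j' : {x // x ∈ ({j} : Finset n)} => (j' : n))).rank < 1 := by
  refine M.rank_submatrix_lt_of_mulVec_eq_zero {i} {j} (w := Pi.single j 1) ?_ ?_ ?_
  · intro j' hj'
    exact Pi.single_eq_of_ne (Finset.notMem_singleton.mp hj') 1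
  · exact (Pi.single_ne_zero_iff).mpr one_ne_zero
  · intro i' hi'
    rw [Finset.mem_singleton.mp hi', mulVec_single_one]
    exact h

/-- The kernel vector is `(M i₂ j₂) e_{j₁} - (M i₂ j₁) e_{j₂}`. -/
theorem Matrix.rank_submatrix_pair_lt [DecidableEq m] {M : Matrix m n K} {i₁ i₂ : m}
    {j₁ j₂ : n} (hj : j₁ ≠ j₂) (h₂₂ : M i₂ j₂ ≠ 0)
    (hminor : M i₁ j₁ * M i₂ j₂ = M i₁ j₂ * M i₂ j₁) :
    (M.submatrix (fun i : {x // x ∈ ({i₁, i₂} : Finset m)} => (i : m))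
      (fun j : {x // x ∈ ({j₁, j₂} : Finset n)} => (j : n))).rank < 2 := by
  rw [← Finset.card_pair hj]
  refine M.rank_submatrix_lt_of_mulVec_eq_zero _ _
    (w := Pi.single j₁ (M i₂ j₂) - Pi.single j₂ (M i₂ j₁)) ?_ ?_ ?_
  · intro j hj'
    simp only [Finset.mem_insert, Finset.mem_singleton, not_or] at hj'
    simp [hj'.1, hj'.2]
  · intro h
    have := congrFun h j₁
    simp [hj, h₂₂] at this
  · intro i hi
    simp only [Finset.mem_insert, Finset.mem_singleton] at hi
    simp only [mulVec_sub, mulVec_single, Pi.sub_apply, Pi.smul_apply, col_apply, op_smul_eq_mul]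
    rcases hi with rfl | rfl
    · rw [hminor, sub_self]
    · ring

end RankSubmatrix

/-- Pigeonhole on the ratios `v j / u j`, which take at most `|Kˣ|` values. -/
theorem exists_ne_mul_eq_mul_of_card_units_lt {K n : Type*} [Field K] [Fintype Kˣ] [Fintype n]
    {u v : n → K} (hu : ∀ j, u j ≠ 0) (hv : ∀ j, v j ≠ 0)
    (hcard : Fintype.card Kˣ < Fintype.card n) :
    ∃ j₁ j₂, j₁ ≠ j₂ ∧ u j₁ * v j₂ = u j₂ * v j₁ := by
  obtain ⟨j₁, j₂, hne, hratio⟩ :=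
    Fintype.exists_ne_map_eq_of_card_lt (fun j => Units.mk0 (v j) (hv j) / Units.mk0 (u j) (hu j))
      hcard
  refine ⟨j₁, j₂, hne, ?_⟩
  have := congrArg Units.val hratio
  simp only [Units.val_div_eq_div_val, Units.val_mk0] at this
  rw [div_eq_div_iff (hu j₁) (hu j₂)] at this
  linear_combination -this

/-- There is no 3-Pirutka 3×3 matrix: every 3×3 integer matrix has nonempty
subsets `I`, `J` with `|I| = |J|` such that `T_{I,J}` does not have rank `|J|`
modulo 3. -/
theorem no_3Pirutka_3x3 (T : Matrix (Fin 3) (Fin 3) ℤ) :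
    ∃ (I J : Finset (Fin 3)), I.Nonempty ∧ J.Nonempty ∧ I.card = J.card ∧
      ((T.map (Int.cast : ℤ → ZMod 3)).submatrix
          (fun i : {x // x ∈ I} => (i : Fin 3))
          (fun j : {x // x ∈ J} => (j : Fin 3))).rank ≠ J.card := by
  set M : Matrix (Fin 3) (Fin 3) (ZMod 3) := T.map (Int.cast : ℤ → ZMod 3)
  by_cases hzero : ∃ i j, M i j = 0
  · obtain ⟨i, j, hij⟩ := hzero
    exact ⟨{i}, {j}, Finset.singleton_nonempty i, Finset.singleton_nonempty j, rfl,
      (rank_submatrix_singleton_lt hij).ne⟩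
  push Not at hzero
  have hcard : Fintype.card (ZMod 3)ˣ < Fintype.card (Fin 3) := by
    rw [ZMod.card_units, Fintype.card_fin]
    norm_num
  obtain ⟨j₁, j₂, hj, hminor⟩ :=
    exists_ne_mul_eq_mul_of_card_units_lt (hzero 0) (hzero 1) hcard
  refine ⟨{0, 1}, {j₁, j₂}, Finset.insert_nonempty _ _, Finset.insert_nonempty _ _, ?_, ?_⟩
  · rw [Finset.card_pair hj, Finset.card_pair (by decide)]
  · rw [Finset.card_pair hj]
    exact (rank_submatrix_pair_lt hj (hzero 1 j₂) hminor).ne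
end

section
/- If ℓ is a prime with ℓ > C(2n−1, n) (the binomial coefficient), then there exists an ℓ-Pirutka n×n integer matrix. -/
/-!
Consider the product `P` of the generic `I × J` minors of an `n × n` matrix of indeterminates,
over all `|I| = |J|`. It is a nonzero polynomial, and since each minor is of degree at most one in
each variable `x_{ij}`, the degree of `P` in `x_{ij}` is at most the number of pairs `(I, J)` with
`|I| = |J|` and `j ∈ J`. Sending `(I, J)` to `I ⊔ Jᶜ` maps these pairs injectively to the
`n`-subsets of `(Fin n ⊕ Fin n) \ {inr j}`, so this degree is below `ℓ`, and the combinatorial Nullstellensatz gives a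
point of `𝔽_ℓ^{n × n}` at which `P` does not vanish.
-/

open Finset Matrix MvPolynomial

section Counting

variable {α β : Type*} [Fintype α] [Fintype β] [DecidableEq α] [DecidableEq β]

theorem card_filter_card_eq_and_mem_le_choose (b : β) :
    #{p : Finset α × Finset β | #p.1 = #p.2 ∧ b ∈ p.2} ≤
      (Fintype.card α + Fintype.card β - 1).choose (Fintype.card β) := by
  calc #{p : Finset α × Finset β | #p.1 = #p.2 ∧ b ∈ p.2}
      ≤ #(powersetCard (Fintype.card β) (univ.erase (Sum.inr b))) := by
        refine card_le_card_of_injOn (fun p => p.1.disjSum p.2ᶜ) ?_ ?_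
        · rintro ⟨I, J⟩ hp
          obtain ⟨-, hcard, hb⟩ := mem_filter.1 (mem_coe.1 hp)
          dsimp only at hcard hb
          have hJ : #J ≤ Fintype.card β := card_le_univ J
          simp only [mem_coe, mem_powersetCard, card_disjSum, card_compl]
          refine ⟨fun x hx => mem_erase.2 ⟨?_, mem_univ x⟩, by omega⟩
          rintro rfl
          simp [hb] at hx
        · rintro ⟨I, J⟩ - ⟨I', J'⟩ - h
          simpa using disjSum_inj.1 h
    _ = (Fintype.card α + Fintype.card β - 1).choose (Fintype.card β) := by
        rw [card_powersetCard, card_erase_of_mem (mem_univ _), card_univ, Fintype.card_sum]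

end Counting

namespace MvPolynomial

variable {R σ τ : Type*} [CommRing R]

theorem degreeOf_rename_eq_zero {f : σ → τ} {i : τ} (hi : i ∉ Set.range f)
    (p : MvPolynomial σ R) : (rename f p).degreeOf i = 0 := by
  classical
  by_contra h
  obtain ⟨j, -, rfl⟩ := Finset.mem_image.1 (vars_rename f p (mem_vars_iff_degreeOf_ne_zero.2 h))
  exact hi ⟨j, rfl⟩

end MvPolynomial

namespace Matrix

variable {R ι σ : Type*} [CommRing R] [Nontrivial R] [Fintype ι] [DecidableEq ι]

theorem degreeOf_det_mvPolynomialX_le_one (w : ι × ι) :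
    (det (mvPolynomialX ι ι R)).degreeOf w ≤ 1 := by
  rw [det_apply']
  refine (degreeOf_sum_le _ _ _).trans (Finset.sup_le fun π _ => ?_)
  refine (degreeOf_mul_le _ _ _).trans ?_
  rw [← map_intCast (C : R →+* MvPolynomial (ι × ι) R), degreeOf_C, zero_add]
  calc (∏ i, mvPolynomialX ι ι R (π i) i).degreeOf w
      ≤ ∑ i, (X (π i, i) : MvPolynomial (ι × ι) R).degreeOf w := degreeOf_prod_le _ _ _
    _ ≤ ∑ i, if i = w.2 then 1 else 0 := by
        refine sum_le_sum fun i _ => ?_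
        rw [degreeOf_X]
        split_ifs with hw hi hi
        · exact le_rfl
        · exact absurd (congrArg Prod.snd hw).symm hi
        all_goals omega
    _ = 1 := by simp

open Classical in
theorem degreeOf_rename_det_mvPolynomialX_le {k : ι × ι → σ} (hk : k.Injective) (v : σ) :
    (rename k (det (mvPolynomialX ι ι R))).degreeOf v ≤ if v ∈ Set.range k then 1 else 0 := by
  split_ifs with hv
  · obtain ⟨w, rfl⟩ := hv
    rw [degreeOf_rename_of_injective hk]
    exact degreeOf_det_mvPolynomialX_le_one w
  · exact (degreeOf_rename_eq_zero hv _).le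

end Matrix

section GenericMinor

variable {m n : Type*} {I : Finset m} {J : Finset n}

theorem injective_prodMap_equivOfCardEq (h : #I = #J) :
    (Prod.map ((↑) : I → m) ((↑) ∘ Finset.equivOfCardEq h : I → n)).Injective :=
  Subtype.val_injective.prodMap (Subtype.val_injective.comp (Finset.equivOfCardEq h).injective)

variable [DecidableEq m] (R : Type*) [CommRing R]

/-- The `I × J` minor of the generic `m × n` matrix, up to a sign fixed by the arbitrary
bijection `Finset.equivOfCardEq h : I ≃ J`. -/
noncomputable def genericMinor (I : Finset m) (J : Finset n) (h : #I = #J) :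
    MvPolynomial (m × n) R :=
  rename (Prod.map (↑) ((↑) ∘ Finset.equivOfCardEq h)) (det (mvPolynomialX I I R))

variable {R}

theorem genericMinor_ne_zero [Nontrivial R] (h : #I = #J) : genericMinor R I J h ≠ 0 :=
  (map_ne_zero_iff _ (rename_injective _ (injective_prodMap_equivOfCardEq h))).2
    (det_mvPolynomialX_ne_zero I R)

theorem degreeOf_genericMinor_le [DecidableEq n] [Nontrivial R] (h : #I = #J) (v : m × n) :
    (genericMinor R I J h).degreeOf v ≤ if v.2 ∈ J then 1 else 0 := by
  refine (degreeOf_rename_det_mvPolynomialX_le (injective_prodMap_equivOfCardEq h) v).trans ?_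
  split_ifs with hv hJ <;> try omega
  obtain ⟨w, rfl⟩ := hv
  exact absurd (Finset.equivOfCardEq h w.2).2 hJ

theorem eval_genericMinor (h : #I = #J) (A : Matrix m n R) :
    eval (fun q => A q.1 q.2) (genericMinor R I J h) =
      det (A.submatrix (↑) ((↑) ∘ Finset.equivOfCardEq h)) := by
  rw [genericMinor, eval_rename, eval_det_mvPolynomialX]
  rfl

theorem rank_submatrix_eq_card_of_eval_genericMinor_ne_zero {K : Type*} [Field K]
    (h : #I = #J) (A : Matrix m n K) (hA : eval (fun q => A q.1 q.2) (genericMinor K I J h) ≠ 0) :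
    (A.submatrix ((↑) : I → m) ((↑) : J → n)).rank = #J := by
  rw [eval_genericMinor] at hA
  have hunit : IsUnit (A.submatrix ((↑) : I → m) ((↑) ∘ Finset.equivOfCardEq h)) :=
    (isUnit_iff_isUnit_det _).2 hA.isUnit
  rw [← rank_submatrix _ (Equiv.refl I) (Finset.equivOfCardEq h)]
  exact (rank_of_isUnit _ hunit).trans ((Fintype.card_coe I).trans h)

end GenericMinor

theorem exists_forall_rank_submatrix_eq_card {m n K : Type*} [Fintype m] [Fintype n]
    [DecidableEq m] [DecidableEq n] [Field K] [Fintype K]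
    (hK : (Fintype.card m + Fintype.card n - 1).choose (Fintype.card n) < Fintype.card K) :
    ∃ A : Matrix m n K, ∀ (I : Finset m) (J : Finset n), #I = #J →
      (A.submatrix ((↑) : I → m) ((↑) : J → n)).rank = #J := by
  let S : Finset (Finset m × Finset n) := {p | #p.1 = #p.2}
  let P : MvPolynomial (m × n) K := ∏ p ∈ S.attach, genericMinor K p.1.1 p.1.2 (mem_filter.1 p.2).2
  have hP : P ≠ 0 := prod_ne_zero_iff.2 fun p _ => genericMinor_ne_zero _
  have hdeg (v : m × n) : P.degreeOf v < #(univ : Finset K) := calc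
    P.degreeOf v ≤ ∑ p ∈ S.attach, (genericMinor K p.1.1 p.1.2 (mem_filter.1 p.2).2).degreeOf v :=
        degreeOf_prod_le _ _ _
    _ ≤ ∑ p ∈ S.attach, if v.2 ∈ p.1.2 then 1 else 0 :=
        sum_le_sum fun p _ => degreeOf_genericMinor_le _ v
    _ = #{p : Finset m × Finset n | #p.1 = #p.2 ∧ v.2 ∈ p.2} := by
        rw [sum_attach S fun p => if v.2 ∈ p.2 then 1 else 0, sum_boole, filter_filter]
        rfl
    _ < #(univ : Finset K) := (card_filter_card_eq_and_mem_le_choose v.2).trans_lt hK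
  obtain ⟨x, hx⟩ : ∃ x : m × n → K, eval x P ≠ 0 := by
    by_contra! hx
    exact hP (eq_zero_of_eval_zero_at_prod_finset P (fun _ => univ) hdeg fun x _ => hx x)
  refine ⟨Matrix.of fun i j => x (i, j), fun I J h => ?_⟩
  refine rank_submatrix_eq_card_of_eval_genericMinor_ne_zero h _ ?_
  rw [eval_prod] at hx
  exact prod_ne_zero_iff.1 hx ⟨(I, J), mem_filter.2 ⟨mem_univ _, h⟩⟩ (mem_attach _ _)

/-- If `ℓ > C(2n-1, n)` is prime, then there exists an ℓ-Pirutka `n × n`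
integer matrix. -/
theorem exists_pirutka_of_large_prime (n ℓ : ℕ) (hℓ : ℓ.Prime)
    (h : Nat.choose (2 * n - 1) n < ℓ) :
    ∃ T : Matrix (Fin n) (Fin n) ℤ, IsPirutka ℓ n n T := by
  have : Fact ℓ.Prime := ⟨hℓ⟩
  obtain ⟨A, hA⟩ := exists_forall_rank_submatrix_eq_card (m := Fin n) (n := Fin n) (K := ZMod ℓ)
    (by rwa [ZMod.card, Fintype.card_fin, ← two_mul])
  have hT : (A.map fun a => (a.cast : ℤ)).map (Int.cast : ℤ → ZMod ℓ) = A := by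
    ext i j
    exact ZMod.intCast_zmod_cast _
  refine ⟨A.map fun a => (a.cast : ℤ), fun I J _ _ hIJ => ?_⟩
  rw [hT]
  exact hA I J (by omega)
end

section
/- Let Σ be an abstract simplicial complex. The barycentric subdivision Sd(Σ), defined as the iterated star subdivision of Σ first at all top-dimensional simplices, then at all simplices of the next dimension down, and so on through all 1-simplices, is isomorphic as a simplicial complex to the order complex Fl(Σ), whose vertices are the simplices of Σ and whose i-simplices are the flags (chains under inclusion) of length i+1 of simplices of Σ. -/
/-!
After star subdivision of `K` at the simplices of a set `S`, the faces are the sets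
`τ ⊔ {e_ρ | ρ ∈ C}` where `C` is a chain in `S` and `τ` is empty or a face of `K` that contains
no member of `S` and is strictly contained in every member of `C`. This description survives
a further subdivision at a simplex `σ` whose strict cofaces all lie in `S`: faces not containing
`σ` are untouched, while `σ ⊔ C` (the only faces with `σ ⊆ τ`, since no larger `τ` is left)
are replaced by the faces `(σ \ J) ⊔ {e_σ} ⊔ C`, i.e. `σ` joins the chain at the bottom.
Once `S` consists of all simplices with at least two vertices, `τ` is empty or a single vertex,
and the vertex map sends the face to the flag `{τ} ∪ C`; it is undone by splitting a flag
into its singletons and its larger simplices.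
-/

/-- The faces of the star subdivision of a simplicial complex (given by its
set of faces `F`) at a simplex `σ`, with fresh vertex `e`. -/
def starFaces {V : Type*} [DecidableEq V] (F : Set (Finset V)) (σ : Finset V)
    (e : V) : Set (Finset V) :=
  {τ ∈ F | ¬ σ ⊆ τ} ∪
    {s | ∃ τ ∈ F, ∃ J : Finset V, J.Nonempty ∧ J ⊆ σ ∧ σ ⊆ τ ∧
      s = (τ \ J) ∪ {e}}

/-- The faces of the iterated star subdivision of a simplicial complex `K` on
vertex set `V`, subdividing in turn at each simplex `σ` in the list `L`, with
fresh vertex `e_σ = Sum.inr σ`.  The ambient vertex type is `V ⊕ Finset V`,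
with the original vertices embedded via `Sum.inl`. -/
def iteratedStarFaces {V : Type*} [DecidableEq V] (K : Set (Finset V))
    (L : List (Finset V)) : Set (Finset (V ⊕ Finset V)) :=
  L.foldl (fun F σ => starFaces F (σ.image Sum.inl) (Sum.inr σ))
    ((fun s : Finset V => s.image Sum.inl) '' K)

namespace Finset

variable {α β : Type*}

@[simp] lemma toLeft_singleton_inr (b : β) : ({Sum.inr b} : Finset (α ⊕ β)).toLeft = ∅ := by
  ext; simp

@[simp] lemma toRight_singleton_inr (b : β) : ({Sum.inr b} : Finset (α ⊕ β)).toRight = {b} := by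
  ext; simp

lemma ext_toLeft_toRight {u v : Finset (α ⊕ β)} (hl : u.toLeft = v.toLeft)
    (hr : u.toRight = v.toRight) : u = v :=
  sumEquiv.injective (Prod.ext hl hr)

lemma _root_.IsChain.mem_of_singleton_mem {C : Set (Finset α)} (hC : IsChain (· ⊆ ·) C)
    (hne : ∀ ρ ∈ C, ρ.Nonempty) {v : α} (hv : {v} ∈ C) {ρ : Finset α} (hρ : ρ ∈ C) : v ∈ ρ := by
  by_cases h : {v} = ρ
  · exact h ▸ mem_singleton_self v
  · rcases hC hv hρ h with h' | h'
    · exact h' (mem_singleton_self v)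
    · exact absurd ((hne ρ hρ).subset_singleton_iff.1 h').symm h

variable [DecidableEq α] [DecidableEq β]

@[simp] lemma toLeft_image_inl (s : Finset α) :
    (s.image (Sum.inl : α → α ⊕ β)).toLeft = s := by
  ext; simp

@[simp] lemma toRight_image_inl (s : Finset α) :
    (s.image (Sum.inl : α → α ⊕ β)).toRight = ∅ := by
  ext; simp

lemma image_inl_subset_iff {s : Finset α} {u : Finset (α ⊕ β)} :
    s.image Sum.inl ⊆ u ↔ s ⊆ u.toLeft := by
  simp [subset_iff]

lemma image_singleton_subset_of_card_le_one {s : Finset α} (hs : s.card ≤ 1) :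
    s.image singleton ⊆ {s} := by
  intro t ht
  obtain ⟨v, hv, rfl⟩ := mem_image.1 ht
  exact mem_singleton.2
    (eq_singleton_iff_unique_mem.2 ⟨hv, fun w hw => card_le_one.1 hs w hw v hv⟩).symm

end Finset

open Finset

section Subdivision

variable {V : Type*} {K S : Set (Finset V)} {σ : Finset V} {s τ : Finset (V ⊕ Finset V)}

/-- The faces `s = τ ⊔ {e_ρ | ρ ∈ C}`, with `τ = s.toLeft` and `C = s.toRight`, of the star
subdivision of `K` at the simplices in `S`. -/
structure IsSubdivFace (K S : Set (Finset V)) (s : Finset (V ⊕ Finset V)) : Prop where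
  nonempty : s.Nonempty
  toRight_mem : ∀ ρ ∈ s.toRight, ρ ∈ S
  isChain_toRight : IsChain (· ⊆ ·) (s.toRight : Set (Finset V))
  toLeft_mem : s.toLeft.Nonempty → s.toLeft ∈ K
  not_subset_toLeft : ∀ ρ ∈ S, ¬ρ ⊆ s.toLeft
  toLeft_ssubset : ∀ ρ ∈ s.toRight, s.toLeft ⊂ ρ

lemma IsSubdivFace.insert_of_not_subset (hs : IsSubdivFace K S s) (hσ : ¬σ ⊆ s.toLeft) :
    IsSubdivFace K (insert σ S) s where
  __ := hs
  toRight_mem ρ hρ := Set.mem_insert_of_mem σ (hs.toRight_mem ρ hρ)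
  not_subset_toLeft := by
    simpa only [Set.forall_mem_insert] using ⟨hσ, hs.not_subset_toLeft⟩

lemma IsSubdivFace.of_insert (hs : IsSubdivFace K (insert σ S) s) (hσ : σ ∉ s.toRight) :
    IsSubdivFace K S s where
  __ := hs
  toRight_mem ρ hρ :=
    (hs.toRight_mem ρ hρ).resolve_left fun h => hσ (h ▸ hρ)
  not_subset_toLeft ρ hρ := hs.not_subset_toLeft ρ (Set.mem_insert_of_mem σ hρ)

lemma IsSubdivFace.toLeft_eq (hτ : IsSubdivFace K S τ) (hσ : σ.Nonempty)
    (hS : ∀ ρ ∈ K, σ ⊂ ρ → ρ ∈ S) (hστ : σ ⊆ τ.toLeft) : τ.toLeft = σ := by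
  by_contra hne
  have hlt : σ ⊂ τ.toLeft := hστ.ssubset_of_ne (Ne.symm hne)
  exact hτ.not_subset_toLeft _ (hS _ (hτ.toLeft_mem (hσ.mono hστ)) hlt) subset_rfl

variable [DecidableEq V]

lemma image_image_inl_eq_setOf_isSubdivFace_empty (hne : ∀ s ∈ K, s.Nonempty) :
    (fun s : Finset V => s.image Sum.inl) '' K = {s | IsSubdivFace K ∅ s} := by
  ext s
  constructor
  · rintro ⟨τ, hτ, rfl⟩
    exact ⟨(hne τ hτ).image _, by simp, by simp, by simp [hτ], by simp, by simp⟩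
  · rintro ⟨hs, hsr, -, hsl, -, -⟩
    have hr : s.toRight = ∅ := eq_empty_of_forall_notMem hsr
    refine ⟨s.toLeft, hsl ?_, ext_toLeft_toRight (by simp) (by simp [hr])⟩
    simpa [← card_pos, ← card_toLeft_add_card_toRight, hr] using hs.card_pos

lemma IsSubdivFace.sdiff_union_singleton_inr (hdown : ∀ s ∈ K, ∀ t ⊆ s, t.Nonempty → t ∈ K)
    (hσK : σ ∈ K) (hS : ∀ ρ ∈ K, σ ⊂ ρ → ρ ∈ S) (hS' : ∀ ρ ∈ S, ¬ρ ⊆ σ)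
    (hτ : IsSubdivFace K S τ) {J : Finset (V ⊕ Finset V)}
    (hJ : J.Nonempty) (hJσ : J ⊆ σ.image Sum.inl) (hστ : σ.image Sum.inl ⊆ τ) :
    IsSubdivFace K (insert σ S) (τ \ J ∪ {Sum.inr σ}) := by
  obtain ⟨x, hx⟩ := hJ
  obtain ⟨v, -, rfl⟩ := mem_image.1 (hJσ hx)
  have hτl : τ.toLeft = σ :=
    hτ.toLeft_eq ⟨v, by simpa using hJσ hx⟩ hS (image_inl_subset_iff.1 hστ)
  have hJl : J.toLeft ⊆ σ := by simpa using toLeft_subset_toLeft hJσ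
  have hJr : J.toRight = ∅ := by simpa using toRight_subset_toRight hJσ
  have hlt : σ \ J.toLeft ⊂ σ := sdiff_ssubset hJl ⟨v, mem_toLeft.2 hx⟩
  have hτr : ∀ ρ ∈ τ.toRight, σ ⊂ ρ := hτl ▸ hτ.toLeft_ssubset
  have hsl : (τ \ J ∪ {Sum.inr σ}).toLeft = σ \ J.toLeft := by
    simp [toLeft_sdiff, hτl]
  have hsr : (τ \ J ∪ {Sum.inr σ}).toRight = insert σ τ.toRight := by
    rw [toRight_union, toRight_sdiff, hJr, sdiff_empty, toRight_singleton_inr, union_comm]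
    rfl
  refine ⟨⟨Sum.inr σ, by simp⟩, ?_, ?_, ?_, ?_, ?_⟩ <;> simp only [hsl, hsr]
  · exact Finset.forall_mem_insert .. |>.2 ⟨Set.mem_insert σ S,
      fun ρ hρ => Set.mem_insert_of_mem σ (hτ.toRight_mem ρ hρ)⟩
  · rw [coe_insert]
    exact hτ.isChain_toRight.insert fun ρ hρ _ => Or.inl (hτr ρ hρ).subset
  · exact hdown σ hσK _ sdiff_subset
  · exact Set.forall_mem_insert.2 ⟨hlt.not_subset, fun ρ hρ h => hS' ρ hρ (h.trans sdiff_subset)⟩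
  · exact Finset.forall_mem_insert .. |>.2 ⟨hlt, fun ρ hρ => hlt.trans (hτr ρ hρ)⟩
lemma IsSubdivFace.exists_eq_sdiff_union_singleton_inr (hσK : σ ∈ K) (hS' : ∀ ρ ∈ S, ¬ρ ⊆ σ)
    (hs : IsSubdivFace K (insert σ S) s) (hσs : σ ∈ s.toRight) :
    ∃ τ, IsSubdivFace K S τ ∧ ∃ J : Finset (V ⊕ Finset V), J.Nonempty ∧
      J ⊆ σ.image Sum.inl ∧ σ.image Sum.inl ⊆ τ ∧ s = τ \ J ∪ {Sum.inr σ} := by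
  have hlt : s.toLeft ⊂ σ := hs.toLeft_ssubset σ hσs
  have hrest : ∀ ρ ∈ s.toRight.erase σ, ρ ∈ S ∧ σ ⊂ ρ := by
    intro ρ hρ
    obtain ⟨hρσ, hρ⟩ := mem_erase.1 hρ
    have hρS : ρ ∈ S := (hs.toRight_mem ρ hρ).resolve_left hρσ
    refine ⟨hρS, ?_⟩
    rcases hs.isChain_toRight hσs hρ (Ne.symm hρσ) with h | h
    · exact h.ssubset_of_ne (Ne.symm hρσ)
    · exact absurd h (hS' ρ hρS)
  refine ⟨σ.disjSum (s.toRight.erase σ), ⟨?_, ?_, ?_, ?_, ?_, ?_⟩, (σ \ s.toLeft).image Sum.inl,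
    (sdiff_nonempty.2 hlt.not_subset).image _, image_subset_image sdiff_subset, ?_, ?_⟩
  · obtain ⟨v, hv, -⟩ := exists_of_ssubset hlt
    exact ⟨Sum.inl v, by simpa using hv⟩
  · simpa using fun ρ hρ => (hrest ρ hρ).1
  · simpa using hs.isChain_toRight.mono (coe_subset.2 (erase_subset σ _))
  · simpa using fun _ => hσK
  · simpa using hS'
  · simpa using fun ρ hρ => (hrest ρ hρ).2
  · simp [image_inl_subset_iff]
  · refine ext_toLeft_toRight ?_ ?_
    · rw [toLeft_union, toLeft_sdiff, toLeft_disjSum, toLeft_image_inl, toLeft_singleton_inr,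
        union_empty, _root_.sdiff_sdiff_eq_self hlt.subset]
    · simp [toRight_sdiff, insert_erase hσs]

lemma starFaces_setOf_isSubdivFace (hdown : ∀ s ∈ K, ∀ t ⊆ s, t.Nonempty → t ∈ K)
    (hσK : σ ∈ K) (hS : ∀ ρ ∈ K, σ ⊂ ρ → ρ ∈ S) (hS' : ∀ ρ ∈ S, ¬ρ ⊆ σ) :
    starFaces {s | IsSubdivFace K S s} (σ.image Sum.inl) (Sum.inr σ) =
      {s | IsSubdivFace K (insert σ S) s} := by
  ext s
  constructor
  · rintro (⟨hs, hσs⟩ | ⟨τ, hτ, J, hJ, hJσ, hστ, rfl⟩)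
    · exact hs.insert_of_not_subset (mt image_inl_subset_iff.2 hσs)
    · exact hτ.sdiff_union_singleton_inr hdown hσK hS hS' hJ hJσ hστ
  · intro hs
    by_cases hσs : σ ∈ s.toRight
    · exact Or.inr (hs.exists_eq_sdiff_union_singleton_inr hσK hS' hσs)
    · exact Or.inl ⟨hs.of_insert hσs,
        fun h => hs.not_subset_toLeft σ (Set.mem_insert σ S) (image_inl_subset_iff.1 h)⟩

lemma foldl_starFaces_setOf_isSubdivFace (hdown : ∀ s ∈ K, ∀ t ⊆ s, t.Nonempty → t ∈ K)
    (L : List (Finset V)) (hLK : ∀ σ ∈ L, σ ∈ K)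
    (hup : ∀ σ ∈ L, ∀ ρ ∈ K, σ ⊂ ρ → ρ ∈ S ∨ ρ ∈ L) (hSL : ∀ ρ ∈ S, ∀ σ ∈ L, ¬ρ ⊆ σ)
    (hL : L.Pairwise fun σ τ => ¬σ ⊆ τ) :
    L.foldl (fun F σ => starFaces F (σ.image Sum.inl) (Sum.inr σ)) {s | IsSubdivFace K S s} =
      {s | IsSubdivFace K (S ∪ {σ | σ ∈ L}) s} := by
  induction L generalizing S with
  | nil => simp
  | cons σ L ih =>
    obtain ⟨hσL, hL⟩ := List.pairwise_cons.1 hL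
    have hS : ∀ ρ ∈ K, σ ⊂ ρ → ρ ∈ S := by
      intro ρ hρ hσρ
      refine (hup σ List.mem_cons_self ρ hρ hσρ).resolve_right fun h => ?_
      rcases List.mem_cons.1 h with rfl | h
      · exact hσρ.ne rfl
      · exact hσL ρ h hσρ.subset
    have hS' : ∀ ρ ∈ insert σ S, ∀ σ' ∈ L, ¬ρ ⊆ σ' := by
      rintro ρ (rfl | hρ) σ' hσ'
      · exact hσL σ' hσ'
      · exact hSL ρ hρ σ' (List.mem_cons_of_mem σ hσ')
    have hup' : ∀ σ' ∈ L, ∀ ρ ∈ K, σ' ⊂ ρ → ρ ∈ insert σ S ∨ ρ ∈ L := by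
      intro σ' hσ' ρ hρ hσ'ρ
      rcases hup σ' (List.mem_cons_of_mem σ hσ') ρ hρ hσ'ρ with h | h
      · exact Or.inl (Set.mem_insert_of_mem σ h)
      · rcases List.mem_cons.1 h with rfl | h
        · exact Or.inl (Set.mem_insert ρ S)
        · exact Or.inr h
    rw [List.foldl_cons, starFaces_setOf_isSubdivFace hdown (hLK σ List.mem_cons_self) hS
      (fun ρ hρ => hSL ρ hρ σ List.mem_cons_self),
      ih (fun σ' hσ' => hLK σ' (List.mem_cons_of_mem σ hσ')) hup' hS' hL]
    congr! 3
    ext ρ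
    simp only [Set.mem_union, Set.mem_insert_iff, Set.mem_ofPred_eq, List.mem_cons]
    tauto

end Subdivision

section Flag

variable {V : Type*} {K : Set (Finset V)} {s : Finset (V ⊕ Finset V)}

def flags (K : Set (Finset V)) : Set (Finset (Finset V)) :=
  {C | C.Nonempty ∧ (C : Set (Finset V)) ⊆ K ∧ IsChain (· ⊆ ·) (C : Set (Finset V))}

lemma IsSubdivFace.card_toLeft_le_one (hs : IsSubdivFace K {ρ ∈ K | 2 ≤ ρ.card} s) :
    s.toLeft.card ≤ 1 := by
  by_contra! h
  exact hs.not_subset_toLeft _ ⟨hs.toLeft_mem (card_pos.1 (by omega)), h⟩ subset_rfl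

noncomputable def faceOfFlag (C : Finset (Finset V)) : Finset (V ⊕ Finset V) :=
  (C.preimage singleton singleton_injective.injOn).disjSum (C.filter (2 ≤ ·.card))

@[simp] lemma mem_toLeft_faceOfFlag {C : Finset (Finset V)} {v : V} :
    v ∈ (faceOfFlag C).toLeft ↔ {v} ∈ C := by
  simp [faceOfFlag]

@[simp] lemma toRight_faceOfFlag (C : Finset (Finset V)) :
    (faceOfFlag C).toRight = C.filter (2 ≤ ·.card) :=
  toRight_disjSum

variable [DecidableEq V]

lemma image_sumElim_singleton_id (s : Finset (V ⊕ Finset V)) :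
    s.image (Sum.elim (fun v => ({v} : Finset V)) id) = s.toLeft.image singleton ∪ s.toRight := by
  ext ρ
  simp [Sum.exists]

lemma IsSubdivFace.image_mem_flags (hs : IsSubdivFace K {ρ ∈ K | 2 ≤ ρ.card} s) :
    s.image (Sum.elim (fun v => ({v} : Finset V)) id) ∈ flags K := by
  have hl := image_singleton_subset_of_card_le_one hs.card_toLeft_le_one
  refine ⟨hs.nonempty.image _, ?_, ?_⟩
  · intro ρ hρ
    rcases mem_union.1 (image_sumElim_singleton_id s ▸ hρ) with h | h
    · obtain ⟨v, hv, rfl⟩ := mem_image.1 h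
      rw [mem_singleton.1 (hl h)]
      exact hs.toLeft_mem ⟨v, hv⟩
    · exact (hs.toRight_mem ρ h).1
  · refine (hs.isChain_toRight.insert fun ρ hρ _ => Or.inl (hs.toLeft_ssubset ρ hρ).subset).mono ?_
    rw [image_sumElim_singleton_id, ← coe_insert, coe_subset]
    exact union_subset (hl.trans (singleton_subset_iff.2 (mem_insert_self _ _))) (subset_insert _ _)

lemma faceOfFlag_image (hs : IsSubdivFace K {ρ ∈ K | 2 ≤ ρ.card} s) :
    faceOfFlag (s.image (Sum.elim (fun v => ({v} : Finset V)) id)) = s := by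
  have hr : ∀ ρ ∈ s.toRight, 2 ≤ ρ.card := fun ρ hρ => (hs.toRight_mem ρ hρ).2
  rw [image_sumElim_singleton_id, faceOfFlag, disjSum_eq_iff]
  constructor
  · ext v
    have : {v} ∉ s.toRight := fun h => by simpa using hr _ h
    rw [mem_preimage, mem_union, mem_image]
    simp [this]
  · rw [filter_union, filter_true_of_mem hr, filter_false_of_mem (by simp), empty_union]

lemma image_faceOfFlag {C : Finset (Finset V)} (hC : ∀ ρ ∈ C, ρ.Nonempty) :
    (faceOfFlag C).image (Sum.elim (fun v => ({v} : Finset V)) id) = C := by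
  rw [image_sumElim_singleton_id, faceOfFlag, toLeft_disjSum, toRight_disjSum]
  ext ρ
  simp only [mem_union, mem_image, mem_preimage, mem_filter]
  constructor
  · rintro (⟨v, hv, rfl⟩ | ⟨hρ, -⟩) <;> assumption
  · intro hρ
    by_cases h2 : 2 ≤ ρ.card
    · exact Or.inr ⟨hρ, h2⟩
    · obtain ⟨v, rfl⟩ := card_eq_one.1 (show ρ.card = 1 by have := (hC ρ hρ).card_pos; omega)
      exact Or.inl ⟨v, hρ, rfl⟩

lemma isSubdivFace_faceOfFlag {C : Finset (Finset V)} (hC : C ∈ flags K)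
    (hne : ∀ s ∈ K, s.Nonempty) : IsSubdivFace K {ρ ∈ K | 2 ≤ ρ.card} (faceOfFlag C) := by
  obtain ⟨hC, hCK, hch⟩ := hC
  have hCne : ∀ ρ ∈ C, ρ.Nonempty := fun ρ hρ => hne ρ (hCK hρ)
  have hl : ∀ v ∈ (faceOfFlag C).toLeft, ∀ ρ ∈ C, v ∈ ρ := fun v hv ρ hρ =>
    hch.mem_of_singleton_mem hCne (mem_toLeft_faceOfFlag.1 hv) hρ
  have hcard : (faceOfFlag C).toLeft.card ≤ 1 := card_le_one.2 fun u hu v hv =>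
    mem_singleton.1 (hl u hu {v} (mem_toLeft_faceOfFlag.1 hv))
  refine ⟨image_nonempty.1 (by rwa [image_faceOfFlag hCne]), ?_, ?_, ?_, ?_, ?_⟩
  · simpa using fun ρ hρ h2 => ⟨hCK hρ, h2⟩
  · simpa using hch.mono (coe_subset.2 (filter_subset _ C))
  · rintro ⟨v, hv⟩
    rw [eq_singleton_iff_unique_mem.2 ⟨hv, fun w hw => card_le_one.1 hcard w hw v hv⟩]
    exact hCK (mem_toLeft_faceOfFlag.1 hv)
  · rintro ρ ⟨-, h2⟩ h
    have := card_le_card h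
    omega
  · intro ρ hρ
    obtain ⟨hρC, h2⟩ := mem_filter.1 ((toRight_faceOfFlag C) ▸ hρ)
    refine Finset.ssubset_iff_subset_ne.2 ⟨fun v hv => hl v hv ρ hρC, fun h => ?_⟩
    rw [h] at hcard
    omega

end Flag

/-- The barycentric subdivision `Sd(K)` of a finite simplicial complex `K`,
defined as the iterated star subdivision of `K` first at all simplices of top
dimension, then at all simplices of the next dimension down, and so on through
all `1`-simplices, is isomorphic to the order complex `Fl(K)`, whose vertices
are the simplices of `K` and whose `i`-simplices are the flags of length
`i + 1` of simplices of `K`.  The isomorphism is induced by the vertex map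
sending an original vertex `v` to the `0`-simplex `{v}` and the fresh vertex
`e_σ` to `σ`; it carries the faces of `Sd(K)` bijectively to the faces of
`Fl(K)`, i.e., to the nonempty chains of simplices of `K`. -/
theorem barycentric_iso_orderComplex {V : Type*} [DecidableEq V]
    (K : Set (Finset V)) (hne : ∀ s ∈ K, s.Nonempty)
    (hdown : ∀ s ∈ K, ∀ t ⊆ s, t.Nonempty → t ∈ K)
    (L : List (Finset V)) (hnodup : L.Nodup)
    (hmem : ∀ σ : Finset V, σ ∈ L ↔ σ ∈ K ∧ 2 ≤ σ.card)
    (hsort : L.Pairwise fun σ τ => τ.card ≤ σ.card) :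
    Set.BijOn
      (fun s : Finset (V ⊕ Finset V) =>
        s.image (Sum.elim (fun v => ({v} : Finset V)) id))
      (iteratedStarFaces K L)
      {C : Finset (Finset V) | C.Nonempty ∧ (C : Set (Finset V)) ⊆ K ∧
        IsChain (· ⊆ ·) (C : Set (Finset V))} := by
  have hL : L.Pairwise fun σ τ => ¬σ ⊆ τ := (hsort.and hnodup).imp
    fun ⟨hcard, hστ⟩ hsub => hστ (eq_of_subset_of_card_le hsub hcard)
  have hup : ∀ σ ∈ L, ∀ ρ ∈ K, σ ⊂ ρ → ρ ∈ (∅ : Set (Finset V)) ∨ ρ ∈ L := fun σ hσ ρ hρ hσρ =>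
    Or.inr ((hmem ρ).2 ⟨hρ, ((hmem σ).1 hσ).2.trans (card_lt_card hσρ).le⟩)
  have hfaces : iteratedStarFaces K L = {s | IsSubdivFace K {ρ ∈ K | 2 ≤ ρ.card} s} := by
    rw [iteratedStarFaces, image_image_inl_eq_setOf_isSubdivFace_empty hne,
      foldl_starFaces_setOf_isSubdivFace hdown L (fun σ hσ => ((hmem σ).1 hσ).1) hup
        (fun _ h => h.elim) hL, Set.empty_union,
      show {σ | σ ∈ L} = {ρ ∈ K | 2 ≤ ρ.card} from Set.ext hmem]
  rw [hfaces]
  exact Set.InvOn.bijOn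
    ⟨fun s hs => faceOfFlag_image hs, fun C hC => image_faceOfFlag fun ρ hρ => hne ρ (hC.2.1 hρ)⟩
    (fun s hs => hs.image_mem_flags) fun C hC => isSubdivFace_faceOfFlag hC hne
end

section
/- Let X be a scheme (or more generally, let 'subschemes' be replaced by closed subsets of a catenary topological space with a codimension function). Suppose {W_i}_{i∈I} is a finite collection of irreducible closed subsets of X that intersects properly, and W ⊆ X is an irreducible closed subset such that for every subset J ⊆ I, W intersects each irreducible component of W_J = ⋂_{j∈J} W_j properly (codim of each component of W ∩ W_J is at least codim W + codim of that component). Then the collection {W_i}_{i∈I} ∪ {W} intersects properly. -/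
/-!
Let `J` be a finite set of indices and `Z` an irreducible closed subset of `W ∩ W_J`. Enlarge `Z`
to an irreducible component `Y` of `W_J` and then to a component `Z'` of `W ∩ Y`. The proper
intersection of `W` with `Y` and the antitonicity of coheight give
`codim W + codim W_J ≤ codim W + coheight Y ≤ coheight Z' ≤ coheight Z`, and
`codim W_J ≥ ∑_{j ∈ J} codim W_j` by hypothesis.
-/

open TopologicalSpace

/-- The codimension of a subset `s` of a topological space: the infimum of the
coheights (in the poset of irreducible closed subsets) of the irreducible
closed subsets contained in `s`.  In particular `codim ∅ = ⊤`. -/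
noncomputable def codim {X : Type*} [TopologicalSpace X] (s : Set X) : ℕ∞ :=
  ⨅ (Z : IrreducibleCloseds X) (_ : (Z : Set X) ⊆ s), Order.coheight Z

/-- `Z` is an irreducible component of `s`: a maximal irreducible closed
subset contained in `s`. -/
def IsComponentOf {X : Type*} [TopologicalSpace X]
    (Z : IrreducibleCloseds X) (s : Set X) : Prop :=
  (Z : Set X) ⊆ s ∧
    ∀ Z' : IrreducibleCloseds X, (Z' : Set X) ⊆ s → (Z : Set X) ⊆ Z' → Z = Z'

/-- A finite collection of irreducible closed subsets intersects properly if
for every subset `J` of the index set, the codimension of the intersection is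
at least the sum of the codimensions. -/
def IntersectsProperly {X : Type*} [TopologicalSpace X] {ι : Type*}
    (W : ι → IrreducibleCloseds X) : Prop :=
  ∀ J : Finset ι, (∑ j ∈ J, codim (W j : Set X)) ≤
    codim (⋂ j ∈ J, (W j : Set X))

open Set

section

variable {X : Type*} [TopologicalSpace X]

theorem codim_le_coheight {s : Set X} {Z : IrreducibleCloseds X} (h : (Z : Set X) ⊆ s) :
    codim s ≤ Order.coheight Z :=
  iInf₂_le Z h

theorem IsChain.isPreirreducible_sUnion {c : Set (Set X)} (hc : IsChain (· ⊆ ·) c)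
    (h : ∀ t ∈ c, IsPreirreducible t) : IsPreirreducible (⋃₀ c) := by
  rintro u v hu hv ⟨x, hxc, hxu⟩ ⟨y, hyc, hyv⟩
  obtain ⟨p, hp, hxp⟩ := mem_sUnion.1 hxc
  obtain ⟨q, hq, hyq⟩ := mem_sUnion.1 hyc
  obtain ⟨r, hr, hpr, hqr⟩ := hc.directedOn p hp q hq
  obtain ⟨z, hzr, hz⟩ := h r hr u v hu hv ⟨x, hpr hxp, hxu⟩ ⟨y, hqr hyq, hyv⟩
  exact ⟨z, mem_sUnion_of_mem hzr hr, hz⟩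

theorem exists_isComponentOf_superset {s : Set X} (hs : IsClosed s) {Z : IrreducibleCloseds X}
    (hZ : (Z : Set X) ⊆ s) : ∃ Y : IrreducibleCloseds X, IsComponentOf Y s ∧ Z ≤ Y := by
  obtain ⟨m, hZm, hm⟩ := zorn_subset_nonempty {t : Set X | IsPreirreducible t ∧ t ⊆ s}
    (fun c hc hcc _ => ⟨⋃₀ c, ⟨hcc.isPreirreducible_sUnion fun t ht => (hc ht).1,
      sUnion_subset fun t ht => (hc ht).2⟩, fun _ => subset_sUnion_of_mem⟩)
    Z ⟨Z.isIrreducible.isPreirreducible, hZ⟩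
  have hm_closed : IsClosed m := closure_eq_iff_isClosed.1 <|
    (hm.eq_of_subset ⟨hm.prop.1.closure, closure_minimal hm.prop.2 hs⟩ subset_closure).symm
  refine ⟨⟨m, ⟨Z.isIrreducible.nonempty.mono hZm, hm.prop.1⟩, hm_closed⟩,
    ⟨hm.prop.2, fun Z' hZ' hmZ' => ?_⟩, hZm⟩
  exact IrreducibleCloseds.ext (hm.eq_of_subset ⟨Z'.isIrreducible.isPreirreducible, hZ'⟩ hmZ')

theorem add_codim_le_codim_inter {W : IrreducibleCloseds X} {s : Set X} (hs : IsClosed s)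
    (hW : ∀ Y : IrreducibleCloseds X, IsComponentOf Y s →
      ∀ Z : IrreducibleCloseds X, IsComponentOf Z ((W : Set X) ∩ Y) →
        codim (W : Set X) + Order.coheight Y ≤ Order.coheight Z) :
    codim (W : Set X) + codim s ≤ codim ((W : Set X) ∩ s) := by
  refine le_iInf₂ fun Z hZ => ?_
  obtain ⟨Y, hY, hZY⟩ := exists_isComponentOf_superset hs (hZ.trans inter_subset_right)
  obtain ⟨Z', hZ', hZZ'⟩ := exists_isComponentOf_superset (W.isClosed.inter Y.isClosed)
    (subset_inter (hZ.trans inter_subset_left) hZY)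
  calc codim (W : Set X) + codim s ≤ codim (W : Set X) + Order.coheight Y := by
        gcongr; exact codim_le_coheight hY.1
    _ ≤ Order.coheight Z' := hW Y hY Z' hZ'
    _ ≤ Order.coheight Z := Order.coheight_anti hZZ'

theorem Finset.exists_eq_map_some_or_eq_insertNone {ι : Type*} (J : Finset (Option ι)) :
    ∃ K : Finset ι, J = K.map .some ∨ J = insertNone K := by
  classical
  refine ⟨J.eraseNone, ?_⟩
  by_cases h : none ∈ J
  · rw [insertNone_eraseNone, insert_eq_of_mem h]
    exact .inr rfl
  · rw [map_some_eraseNone, erase_eq_of_notMem h]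
    exact .inl rfl

end

theorem intersectsProperly_insert_general {X : Type*} [TopologicalSpace X]
    {ι : Type*} (W : ι → IrreducibleCloseds X)
    (W₀ : IrreducibleCloseds X)
    (hW : IntersectsProperly W)
    (hW₀ : ∀ J : Finset ι, ∀ Y : IrreducibleCloseds X,
      IsComponentOf Y (⋂ j ∈ J, (W j : Set X)) →
      ∀ Z : IrreducibleCloseds X,
        IsComponentOf Z ((W₀ : Set X) ∩ (Y : Set X)) →
        codim (W₀ : Set X) + Order.coheight Y ≤ Order.coheight Z) :
    IntersectsProperly (fun o : Option ι => o.elim W₀ W) := by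
  intro J
  obtain ⟨K, rfl | rfl⟩ := J.exists_eq_map_some_or_eq_insertNone
  · simpa [Finset.sum_map] using hW K
  · have hK : IsClosed (⋂ j ∈ K, (W j : Set X)) := isClosed_biInter fun j _ => (W j).isClosed
    calc ∑ o ∈ K.insertNone, codim ((o.elim W₀ W : IrreducibleCloseds X) : Set X)
        = codim (W₀ : Set X) + ∑ j ∈ K, codim (W j : Set X) := Finset.sum_insertNone _ _
      _ ≤ codim (W₀ : Set X) + codim (⋂ j ∈ K, (W j : Set X)) := by gcongr; exact hW K
      _ ≤ codim ((W₀ : Set X) ∩ ⋂ j ∈ K, (W j : Set X)) := add_codim_le_codim_inter hK (hW₀ K)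
      _ = codim (⋂ o ∈ K.insertNone, ((o.elim W₀ W : IrreducibleCloseds X) : Set X)) := by
        congr 1; ext; simp [Option.forall]

/-- Suppose `{W_i}` is a finite collection of irreducible closed subsets of
`X` intersecting properly and `W` is an irreducible closed subset such that
for every subset `J` of the index set, `W` intersects each irreducible
component `Y` of `W_J = ⋂_{j ∈ J} W_j` properly, i.e. every irreducible
component `Z` of `W ∩ Y` satisfies `codim Z ≥ codim W + codim Y`.  Then the
collection `{W_i} ∪ {W}` intersects properly. -/
theorem intersectsProperly_insert {X : Type*} [TopologicalSpace X]
    {ι : Type*} [Fintype ι] (W : ι → IrreducibleCloseds X)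
    (W₀ : IrreducibleCloseds X)
    (hW : IntersectsProperly W)
    (hW₀ : ∀ J : Finset ι, ∀ Y : IrreducibleCloseds X,
      IsComponentOf Y (⋂ j ∈ J, (W j : Set X)) →
      ∀ Z : IrreducibleCloseds X,
        IsComponentOf Z ((W₀ : Set X) ∩ (Y : Set X)) →
        codim (W₀ : Set X) + Order.coheight Y ≤ Order.coheight Z) :
    IntersectsProperly (fun o : Option ι => o.elim W₀ W) :=
  intersectsProperly_insert_general W W₀ hW hW₀
end

section
/- Let A be a commutative ring and a ∈ A a regular element (non-zerodivisor). Let E be a finite free A-module and F a finite free A/(a)-module, regarded as an A-module. Then the kernel of any surjective A-module map E → F is a projective A-module. -/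
/-!
Choosing an `A ⧸ (a)`-basis of `F`, the sequence `0 → Aᶥ → Aᶥ → F → 0` whose first map is
multiplication by `a` and whose second is reduction mod `a` followed by the basis is exact
(injectivity on the left is the regularity of `a`). So `F` has a projective resolution of
length one, and Schanuel's lemma then forces the kernel of every surjection from a projective
module onto `F` to be projective.
-/

open LinearMap

namespace Module.Projective

variable {R : Type*} [Ring R]

theorem ker_of_surjective {X P : Type*} [AddCommGroup X] [Module R X] [AddCommGroup P] [Module R P]
    [Module.Projective R X] [Module.Projective R P] (p : X →ₗ[R] P) (hp : Function.Surjective p) :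
    Module.Projective R (ker p) := by
  obtain ⟨s, hs⟩ := p.exists_rightInverse_of_surjective (range_eq_top.2 hp)
  have hsp : ∀ x, x - s (p x) ∈ ker p := fun x => by
    simp [← comp_apply (f := p), hs]
  refine of_split (ker p).subtype ((LinearMap.id - s ∘ₗ p).codRestrict (ker p) hsp) ?_
  ext ⟨x, hx⟩
  simp [mem_ker.1 hx]

theorem ker_of_surjective_of_exact {K P' P N : Type*} [AddCommGroup K] [Module R K]
    [AddCommGroup P'] [Module R P'] [AddCommGroup P] [Module R P] [AddCommGroup N] [Module R N]
    [Module.Projective R K] [Module.Projective R P'] [Module.Projective R P]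
    {i : K →ₗ[R] P'} {g : P' →ₗ[R] N} (hi : Function.Injective i) (hig : Function.Exact i g)
    (hg : Function.Surjective g) (f : P →ₗ[R] N) (hf : Function.Surjective f) :
    Module.Projective R (ker f) := by
  -- Lift `f` along `g` to `h`; then `(x, k) ↦ h x - i k` maps `P × K` onto `P'`, with kernel `ker f`.
  obtain ⟨h, hgh⟩ := projective_lifting_property g f hg
  have hgh' : ∀ x, g (h x) = f x := fun x => congr($hgh x)
  set ψ : P × K →ₗ[R] P' := h ∘ₗ fst R P K - i ∘ₗ snd R P K
  have mem_ker_ψ : ∀ z, z ∈ ker ψ ↔ h z.1 = i z.2 := fun z => by simp [ψ, sub_eq_zero]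
  have hψ : Function.Surjective ψ := by
    intro y
    obtain ⟨x, hx⟩ := hf (g y)
    obtain ⟨k, hk⟩ := (hig (y - h x)).1 (by simp [hgh', hx])
    exact ⟨(x, -k), by simp [ψ, hk]⟩
  have hfst : ∀ z ∈ ker ψ, z.1 ∈ ker f := fun z hz => by
    simp [← hgh', (mem_ker_ψ z).1 hz, hig.apply_apply_eq_zero]
  set e : ker ψ →ₗ[R] ker f := ((fst R P K) ∘ₗ (ker ψ).subtype).codRestrict _ fun z => hfst z z.2
  have he : Function.Bijective e := by
    constructor
    · rintro ⟨⟨x, k⟩, hz⟩ ⟨⟨x', k'⟩, hz'⟩ hxx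
      obtain rfl : x = x' := congr_arg Subtype.val hxx
      have : i k = i k' := ((mem_ker_ψ _).1 hz).symm.trans ((mem_ker_ψ _).1 hz')
      simp [hi this]
    · rintro ⟨x, hx⟩
      obtain ⟨k, hk⟩ := (hig (h x)).1 (by simpa [hgh'] using hx)
      exact ⟨⟨(x, k), (mem_ker_ψ _).2 hk.symm⟩, rfl⟩
  have := ker_of_surjective ψ hψ
  exact of_equiv (LinearEquiv.ofBijective e he)

end Module.Projective

theorem Finsupp.exact_smul_mapRange_mkQ {A : Type*} [CommRing A] (a : A) (ι : Type*) :
    Function.Exact (DistribSMul.toLinearMap A (ι →₀ A) a)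
      (Finsupp.mapRange.linearMap (Ideal.span {a}).mkQ) := by
  rw [exact_iff, Finsupp.ker_mapRange, Submodule.ker_mkQ, ← (Ideal.span {a}).mul_top,
    ← smul_eq_mul, Finsupp.submodule_smul]
  simp only [Finsupp.submodule_top, Submodule.ideal_span_singleton_smul]
  exact (range_eq_map _).symm

theorem ker_surjective_projective_general {A : Type*} [CommRing A] (a : A)
    (ha : a ∈ nonZeroDivisors A)
    (E : Type*) [AddCommGroup E] [Module A E] [Module.Free A E]
    (F : Type*) [AddCommGroup F] [Module (A ⧸ Ideal.span {a}) F]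
    [Module.Free (A ⧸ Ideal.span {a}) F]
    [Module A F] [IsScalarTower A (A ⧸ Ideal.span {a}) F]
    (f : E →ₗ[A] F) (hf : Function.Surjective f) :
    Module.Projective A (LinearMap.ker f) := by
  let ι := Module.Free.ChooseBasisIndex (A ⧸ Ideal.span {a}) F
  let b := Module.Free.chooseBasis (A ⧸ Ideal.span {a}) F
  let g : (ι →₀ A) →ₗ[A] F := (b.repr.restrictScalars A).symm.toLinearMap ∘ₗ
    Finsupp.mapRange.linearMap (Ideal.span {a}).mkQ
  have hg : Function.Surjective g := b.repr.symm.surjective.comp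
    (Finsupp.mapRange_surjective _ rfl (Submodule.mkQ_surjective _))
  have hexact : Function.Exact (DistribSMul.toLinearMap A (ι →₀ A) a) g :=
    LinearEquiv.postcomp_exact_iff_exact.2 (Finsupp.exact_smul_mapRange_mkQ a ι)
  have hreg : Function.Injective (DistribSMul.toLinearMap A (ι →₀ A) a) :=
    Module.IsTorsionFree.isSMulRegular (isRegular_iff_mem_nonZeroDivisors.2 ha)
  exact Module.Projective.ker_of_surjective_of_exact hreg hexact hg f hf

/-- Let `A` be a commutative ring, `a ∈ A` a regular element, `E` a finite
free `A`-module, and `F` a finite free `A/(a)`-module regarded as an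
`A`-module. Then the kernel of any surjective `A`-linear map `E → F` is a
projective `A`-module. -/
theorem ker_surjective_projective {A : Type*} [CommRing A] (a : A)
    (ha : a ∈ nonZeroDivisors A)
    (E : Type*) [AddCommGroup E] [Module A E] [Module.Free A E]
    [Module.Finite A E]
    (F : Type*) [AddCommGroup F] [Module (A ⧸ Ideal.span {a}) F]
    [Module.Free (A ⧸ Ideal.span {a}) F] [Module.Finite (A ⧸ Ideal.span {a}) F]
    [Module A F] [IsScalarTower A (A ⧸ Ideal.span {a}) F]
    (f : E →ₗ[A] F) (hf : Function.Surjective f) :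
    Module.Projective A (LinearMap.ker f) :=
  ker_surjective_projective_general a ha E F f hf
end
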